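/- arXiv:2409.14502 — 3 statements merged into one kernel-verified Lean document; each statement's English description precedes it below -/
import Mathlib

section
/- For all nonnegative integers m and n, the alternating sum ∑_{j=0}^{⌊m/2⌋} (-1)^j * C(m-j, j) * Cat(n-j) equals C(2n-m, n) if m > 2n, and equals C(2n-m, n) * (m+1)/(n+1) if m ≤ 2n, where Cat(k) denotes the k-th Catalan number and C(a,b) the binomial coefficient (with the convention Cat(k)=0 for k<0). -/
/-!
Both sides `f m n` satisfy `f m 0 = 1`, `f 0 n = f 1 n = Cat(n)` and the recurrence
`f (m + 2) (n + 1) = f (m + 1) (n + 1) - f m n`, which determines `f`. For the sum the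
recurrence is Pascal's rule `C(m + 1 - i, i + 1) = C(m - i, i) + C(m - i, i + 1)` applied
termwise; for the right side it is Pascal's rule for the generalized binomial `C(2n - m, ·)`,
combined with absorption `(k + 1) C(x, k + 1) = (x - k) C(x, k)` when `m ≤ 2n`.
-/

open Polynomial Finset

attribute [local instance] BinomialRing.toIsAddTorsionFree in
theorem Ring.succ_nsmul_choose_succ {R : Type*} [CommRing R] [BinomialRing R] (r : R) (k : ℕ) :
    (k + 1) • Ring.choose r (k + 1) = (r - k) * Ring.choose r k := by
  rw [← nsmul_right_inj (Nat.factorial_ne_zero k), smul_smul, mul_comm, ← Nat.factorial_succ,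
    ← descPochhammer_eq_factorial_smul_choose, ← mul_smul_comm,
    ← descPochhammer_eq_factorial_smul_choose, descPochhammer_succ_right, smeval_mul,
    smeval_sub, smeval_X, smeval_natCast]
  simp [mul_comm]

def chuTerm (m n j : ℕ) : ℚ :=
  (-1) ^ j * ((m - j).choose j : ℚ) * (if j ≤ n then (catalan (n - j) : ℚ) else 0)

def chuSum (m n : ℕ) : ℚ := ∑ j ∈ range (m / 2 + 1), chuTerm m n j

noncomputable def chuRhs (m n : ℕ) : ℚ :=
  if 2 * n < m then Ring.choose ((2 * n : ℚ) - m) n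
  else Ring.choose ((2 * n : ℚ) - m) n * (m + 1) / (n + 1)

lemma chuTerm_zero_right (m n : ℕ) : chuTerm m n 0 = catalan n := by
  simp [chuTerm]

lemma chuTerm_eq_zero_of_sub_lt {m j : ℕ} (n : ℕ) (h : m - j < j) : chuTerm m n j = 0 := by
  simp [chuTerm, Nat.choose_eq_zero_of_lt h]

lemma chuTerm_add_two_succ_succ {m i : ℕ} (n : ℕ) (h : i ≤ m) :
    chuTerm (m + 2) (n + 1) (i + 1) = chuTerm (m + 1) (n + 1) (i + 1) - chuTerm m n i := by
  rw [chuTerm, chuTerm, chuTerm, show m + 2 - (i + 1) = m - i + 1 by omega,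
    show m + 1 - (i + 1) = m - i by omega, Nat.choose_succ_succ]
  simp only [Nat.add_le_add_iff_right, Nat.add_sub_add_right]
  push_cast
  ring

lemma sum_range_chuTerm {m N : ℕ} (n : ℕ) (h : m / 2 + 1 ≤ N) :
    ∑ j ∈ range N, chuTerm m n j = chuSum m n :=
  (sum_subset (range_subset_range.2 h) fun j _ hj ↦
    chuTerm_eq_zero_of_sub_lt n (by simp at hj; omega)).symm

lemma chuSum_of_lt_two {m : ℕ} (n : ℕ) (hm : m < 2) : chuSum m n = catalan n := by
  simp [chuSum, Nat.div_eq_of_lt hm, chuTerm_zero_right]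

lemma chuSum_zero_right (m : ℕ) : chuSum m 0 = 1 := by
  rw [chuSum, sum_range_succ']
  simp [chuTerm]

lemma chuSum_add_two_succ (m n : ℕ) :
    chuSum (m + 2) (n + 1) = chuSum (m + 1) (n + 1) - chuSum m n := by
  rw [← sum_range_chuTerm (N := m / 2 + 2) (n + 1) (by omega),
    ← sum_range_chuTerm (N := m / 2 + 2) (n + 1) (by omega),
    ← sum_range_chuTerm (N := m / 2 + 1) n le_rfl, sum_range_succ' (chuTerm (m + 2) (n + 1)),
    sum_range_succ' (chuTerm (m + 1) (n + 1)),
    sum_congr rfl fun i hi ↦ chuTerm_add_two_succ_succ n (by simp at hi; omega), sum_sub_distrib,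
    chuTerm_zero_right, chuTerm_zero_right]
  ring

lemma chuRhs_zero_right (m : ℕ) : chuRhs m 0 = 1 := by
  rw [chuRhs]
  split_ifs <;> simp_all

lemma chuRhs_zero_left (n : ℕ) : chuRhs 0 n = catalan n := by
  have h : ((n + 1) * catalan n : ℕ) = (2 * n).choose n := succ_mul_catalan_eq_centralBinom n
  rw [chuRhs, if_neg (by omega), eq_comm, eq_div_iff (by positivity),
    show (2 * n : ℚ) - (0 : ℕ) = (2 * n : ℕ) by push_cast; ring, Ring.choose_natCast, ← h]
  push_cast
  ring

lemma chuRhs_one_left (n : ℕ) : chuRhs 1 n = catalan n := by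
  rcases n with _ | k
  · simp [chuRhs]
  have h : ((k + 2) * catalan (k + 1) : ℚ) = 2 * (2 * k + 1).choose (k + 1) := by
    norm_cast
    rw [succ_mul_catalan_eq_centralBinom, Nat.centralBinom_eq_two_mul_choose,
      show 2 * (k + 1) = 2 * k + 1 + 1 by ring, Nat.choose_succ_succ, Nat.choose_symm_half]
    ring
  rw [chuRhs, if_neg (by omega), eq_comm, eq_div_iff (by positivity),
    show (2 * (k + 1 : ℕ) : ℚ) - (1 : ℕ) = (2 * k + 1 : ℕ) by push_cast; ring,
    Ring.choose_natCast]
  push_cast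
  linear_combination h

lemma chuRhs_add_two_succ (m n : ℕ) :
    chuRhs (m + 2) (n + 1) = chuRhs (m + 1) (n + 1) - chuRhs m n := by
  have pascal := Ring.choose_succ_succ ((2 * n : ℚ) - m) n
  simp only [chuRhs]
  push_cast
  rw [show 2 * ((n : ℚ) + 1) - (m + 2) = 2 * n - m by ring,
    show 2 * ((n : ℚ) + 1) - (m + 1) = 2 * n - m + 1 by ring]
  rcases lt_trichotomy m (2 * n + 1) with hm | hm | hm
  · have absorb := Ring.succ_nsmul_choose_succ ((2 * n : ℚ) - m) n
    rw [if_neg (by omega), if_neg (by omega), if_neg (by omega), pascal]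
    push_cast [nsmul_eq_mul] at absorb
    field_simp
    linear_combination absorb
  · rw [if_pos (by omega), if_neg (by omega), if_pos (by omega)]
    have hx : (2 * n : ℚ) - m + 1 = 0 := by rw [hm]; push_cast; ring
    rw [hx, Ring.choose_zero_succ] at pascal ⊢
    linear_combination -pascal
  · rw [if_pos (by omega), if_pos (by omega), if_pos (by omega)]
    linear_combination -pascal

lemma chuSum_eq_chuRhs (m n : ℕ) : chuSum m n = chuRhs m n := by
  induction m using Nat.twoStepInduction generalizing n with
  | zero => rw [chuSum_of_lt_two n (by omega), chuRhs_zero_left]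
  | one => rw [chuSum_of_lt_two n (by omega), chuRhs_one_left]
  | more m ih₀ ih₁ =>
    rcases n with _ | n
    · rw [chuSum_zero_right, chuRhs_zero_right]
    · rw [chuSum_add_two_succ, chuRhs_add_two_succ, ih₀, ih₁]

/-- Chu's identity: for all nonnegative integers `m` and `n`,
`∑_{j=0}^{⌊m/2⌋} (-1)^j C(m-j, j) Cat(n-j)` equals `C(2n-m, n)` if `m > 2n` and
`C(2n-m, n) * (m+1)/(n+1)` if `m ≤ 2n`, with the convention `Cat(k) = 0` for `k < 0`
(here `C(2n-m, n)` is the generalized binomial coefficient, possibly with negative top). -/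
theorem chu_catalan_identity (m n : ℕ) :
    ∑ j ∈ Finset.range (m / 2 + 1),
      (-1 : ℚ) ^ j * ((m - j).choose j : ℚ) * (if j ≤ n then (catalan (n - j) : ℚ) else 0) =
    if 2 * n < m then Ring.choose ((2 * n : ℚ) - m) n
    else Ring.choose ((2 * n : ℚ) - m) n * (m + 1) / (n + 1) :=
  chuSum_eq_chuRhs m n
end

section
/- Let F_q be a finite field of odd characteristic and χ a multiplicative character on F_q with χ² nontrivial. Then J(χ,χ) = χ̄(4) J(χ, φ), where φ is the unique quadratic character on F_q and J denotes the Jacobi sum. -/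
/-!
Since `4x(1 - x) = 1 - (1 - 2x)²` and `x ↦ 1 - 2x` is a bijection in odd characteristic,
`χ(4) J(χ,χ) = ∑ᵤ χ(1 - u²)`. A nonzero `t` has `1 + φ(t)` square roots, so this sum is
`∑ₜ (1 + φ(t)) χ(1 - t) = J(φ,χ) + ∑ₜ χ(t)`, and the last sum vanishes for `χ ≠ 1`.
-/

open Finset

variable {F : Type*} [Field F] [Fintype F] {R : Type*} [CommRing R]

lemma MulChar.sum_apply_one_sub_eq_zero [IsDomain R] {χ : MulChar F R} (hχ : χ ≠ 1) :
    ∑ t : F, χ (1 - t) = 0 :=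
  ((Equiv.subLeft (1 : F)).sum_comp χ).trans (MulChar.sum_eq_zero_of_ne_one hχ)

lemma sum_apply_one_sub_two_mul (hF : ringChar F ≠ 2) (f : F → R) :
    ∑ x : F, f (1 - 2 * x) = ∑ u : F, f u :=
  Fintype.sum_equiv ((Equiv.mulLeft₀ 2 (Ring.two_ne_zero hF)).trans (Equiv.subLeft 1)) _ _
    fun _ => rfl

lemma sum_apply_sq_eq_sum_quadraticChar_add_one [DecidableEq F] (hF : ringChar F ≠ 2)
    (f : F → R) : ∑ u : F, f (u ^ 2) = ∑ t : F, ((quadraticChar F t : R) + 1) * f t := by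
  rw [← sum_fiberwise' univ (· ^ 2) f]
  refine sum_congr rfl fun t _ => ?_
  rw [sum_const, nsmul_eq_mul]
  have hcard := quadraticChar_card_sqrts hF t
  rw [Set.toFinset_ofPred] at hcard
  congr 1
  exact_mod_cast congrArg (Int.cast : ℤ → R) hcard

lemma jacobiSum_self_eq_inv_mul_sum (hF : ringChar F ≠ 2) (χ : MulChar F R) :
    jacobiSum χ χ = χ⁻¹ 4 * ∑ u : F, χ (1 - u ^ 2) := by
  have h4 : (4 : F) ≠ 0 := by
    simpa [show (4 : F) = 2 ^ 2 by norm_num] using Ring.two_ne_zero hF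
  rw [← sum_apply_one_sub_two_mul hF, jacobiSum, mul_sum]
  refine sum_congr rfl fun x _ => ?_
  rw [MulChar.inv_apply', ← map_mul, ← map_mul]
  congr 1
  field_simp
  ring

lemma sum_apply_one_sub_sq_eq_jacobiSum_quadraticChar [DecidableEq F] [IsDomain R]
    (hF : ringChar F ≠ 2) {χ : MulChar F R} (hχ : χ ≠ 1) :
    ∑ u : F, χ (1 - u ^ 2) = jacobiSum χ ((quadraticChar F).ringHomComp (Int.castRingHom R)) := by
  rw [sum_apply_sq_eq_sum_quadraticChar_add_one hF fun t => χ (1 - t)]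
  simp only [add_mul, one_mul, sum_add_distrib, MulChar.sum_apply_one_sub_eq_zero hχ, add_zero]
  rw [jacobiSum_comm]
  rfl

/-- For `F_q` a finite field of odd characteristic and `χ` a multiplicative character on
`F_q` with `χ²` nontrivial, `J(χ,χ) = χ̄(4) J(χ, φ)`, where `φ` is the quadratic
character. -/
theorem jacobiSum_self (F : Type) [Field F] [Fintype F] [DecidableEq F]
    (hF : ringChar F ≠ 2) (χ : MulChar F ℂ) (hχ : χ ^ 2 ≠ 1) :
    jacobiSum χ χ =
      χ⁻¹ (4 : F) *
        jacobiSum χ ((quadraticChar F).ringHomComp (Int.castRingHom ℂ)) := by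
  have hχ₁ : χ ≠ 1 := fun h => hχ (by rw [h, one_pow])
  rw [jacobiSum_self_eq_inv_mul_sum hF, sum_apply_one_sub_sq_eq_jacobiSum_quadraticChar hF hχ₁]
end

section
/- Let p > 3 be prime. Then ∑_{λ ∈ F_p^×} H_p({1/6,5/6},{1,1}; λ)² = p² - 3p - 1 if p ≡ 1 (mod 3), and p² - p - 1 if p ≡ 2 (mod 3). In particular, (1/p²) ∑_{λ ∈ F_p} H_p({1/6,5/6},{1,1}; λ)² → 1 as p → ∞. -/
/-- The Gauss sum `g(χ) = ∑_{x ∈ F_p^×} χ(x) ζ_p^x` over the prime field `F_p`. -/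
noncomputable def gaussSumP (p : ℕ) (ζ : ℂ) (χ : MulChar (ZMod p) ℂ) : ℂ :=
  ∑ᶠ x : ZMod p, χ x * ζ ^ (ZMod.val x)

/-- The finite field hypergeometric function `H_p({1/6,5/6},{1,1}; λ)`, given by
`(1/(1-p)) ∑_χ g(χ⁶)g(χ)g(χ̄)²/(g(χ²)g(χ³)) · χ(λ/432)` for `λ ≠ 0`, with the
convention `H_p(0) = 1`. -/
noncomputable def Hp66 (p : ℕ) (ζ : ℂ) (lam : ZMod p) : ℂ :=
  if lam = 0 then 1
  else (1 / (1 - (p : ℂ))) * ∑ᶠ χ : MulChar (ZMod p) ℂ,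
    gaussSumP p ζ (χ ^ 6) * gaussSumP p ζ χ * (gaussSumP p ζ χ⁻¹) ^ 2 /
      (gaussSumP p ζ (χ ^ 2) * gaussSumP p ζ (χ ^ 3)) * χ (lam * Ring.inverse (432 : ZMod p))

/-!
Over `F_q` write `H(λ) = (1/(1-q)) ∑_χ A(χ) χ(λ/432)`. Orthogonality of characters turns
`∑_{λ ≠ 0} H(λ)²` into `(1/(q-1)) ∑_χ A(χ) A(χ⁻¹)`. Since `g(χ) g(χ⁻¹) = χ(-1) q` for `χ ≠ 1`
and `g(1)² = 1`, the product `A(χ) A(χ⁻¹)` is `1` for `χ = 1`, `q` for `χ` of exact order 6 and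
`q²` otherwise; characters of order 6 exist, `φ(6) = 2` of them, exactly when `6 ∣ q - 1`,
i.e. when `p ≡ 1 (mod 3)`.
-/

open Finset

section CharacterSums

variable {F R : Type*} [Field F] [Fintype F] [CommRing R] [IsDomain R] {ψ : AddChar F R}

lemma gaussSum_mul_gaussSum_inv [DecidableEq (MulChar F R)] (hψ : ψ ≠ 1)
    (χ : MulChar F R) :
    gaussSum χ ψ * gaussSum χ⁻¹ ψ = χ (-1) * if χ = 1 then 1 else (Fintype.card F : R) := by
  split_ifs with hχ
  · simp [hχ, gaussSum_one_left hψ, MulChar.one_apply isUnit_one.neg]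
  · rw [← mul_gaussSum_inv_eq_gaussSum χ⁻¹, mul_left_comm,
      gaussSum_mul_gaussSum_eq_card hχ (AddChar.IsPrimitive.of_ne_one hψ), MulChar.inv_apply',
      inv_neg_one]

lemma gaussSum_pow_mul_gaussSum_pow_inv [DecidableEq (MulChar F R)] (hψ : ψ ≠ 1)
    (χ : MulChar F R) (k : ℕ) :
    gaussSum (χ ^ k) ψ * gaussSum (χ ^ k)⁻¹ ψ =
      χ (-1) ^ k * if χ ^ k = 1 then 1 else (Fintype.card F : R) := by
  rw [gaussSum_mul_gaussSum_inv hψ, show (χ ^ k) (-1) = χ (-1) ^ k by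
    simpa using χ.pow_apply_coe k (-1)]

lemma gaussSum_ne_zero (hψ : ψ ≠ 1) (hq : (Fintype.card F : R) ≠ 0) (χ : MulChar F R) :
    gaussSum χ ψ ≠ 0 := by
  classical
  refine left_ne_zero_of_mul (b := gaussSum χ⁻¹ ψ) ?_
  rw [gaussSum_mul_gaussSum_inv hψ]
  refine mul_ne_zero (isUnit_one.neg.map χ).ne_zero ?_
  split_ifs <;> simp [hq]

lemma sum_mulChar_mul_mulChar [DecidableEq (MulChar F R)] (χ φ : MulChar F R) :
    ∑ t, χ t * φ t = if φ = χ⁻¹ then (Fintype.card F : R) - 1 else 0 := by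
  classical
  simp_rw [← MulChar.mul_apply]
  split_ifs with h
  · rw [h, mul_inv_cancel, MulChar.sum_one_eq_card_units, Fintype.card_units,
      Nat.cast_sub Fintype.card_pos, Nat.cast_one]
  · exact MulChar.sum_eq_zero_of_ne_one fun h' ↦ h (eq_inv_of_mul_eq_one_right h')

lemma sum_sq_sum_mulChar [Fintype (MulChar F R)] (a : MulChar F R → R) :
    ∑ t, (∑ χ, a χ * χ t) ^ 2 = ((Fintype.card F : R) - 1) * ∑ χ, a χ * a χ⁻¹ := by
  classical
  calc ∑ t, (∑ χ, a χ * χ t) ^ 2 = ∑ χ, ∑ φ, a χ * a φ * ∑ t, χ t * φ t := by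
        simp_rw [sq, sum_mul_sum, mul_sum]
        rw [sum_comm]
        refine sum_congr rfl fun χ _ ↦ ?_
        rw [sum_comm]
        exact sum_congr rfl fun φ _ ↦ sum_congr rfl fun t _ ↦ by ring
    _ = ((Fintype.card F : R) - 1) * ∑ χ, a χ * a χ⁻¹ := by
        simp_rw [sum_mulChar_mul_mulChar, mul_ite, mul_zero, sum_ite_eq', mem_univ, if_true,
          mul_sum, mul_comm]

end CharacterSums

section CharacterCount

variable (F R : Type*) [Field F] [Fintype F] [CommRing R]
  [HasEnoughRootsOfUnity R (Monoid.exponent Fˣ)] [Fintype (MulChar F R)]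

lemma card_mulChar_eq_card_sub_one : Fintype.card (MulChar F R) = Fintype.card F - 1 := by
  rw [← Nat.card_eq_fintype_card, MulChar.card_eq_card_units_of_hasEnoughRootsOfUnity,
    Nat.card_units, Nat.card_eq_fintype_card]

lemma card_mulChar_orderOf_eq (n : ℕ) :
    #{χ : MulChar F R | orderOf χ = n} =
      if n ∣ Fintype.card F - 1 then n.totient else 0 := by
  have : IsCyclic (MulChar F R) :=
    isCyclic_of_surjective _ (MulChar.mulEquiv_units F R).some.symm.surjective
  rw [← card_mulChar_eq_card_sub_one F R]
  split_ifs with hn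
  · exact IsCyclic.card_orderOf_eq_totient hn
  · rw [card_eq_zero, filter_eq_empty_iff]
    rintro χ - rfl
    exact hn orderOf_dvd_card

end CharacterCount

section HypergeometricCoefficient

variable {F R : Type*} [Field F] [Fintype F] [Field R] {ψ : AddChar F R}

noncomputable def sixthHyperCoeff (ψ : AddChar F R) (χ : MulChar F R) : R :=
  gaussSum (χ ^ 6) ψ * gaussSum χ ψ * gaussSum χ⁻¹ ψ ^ 2 /
    (gaussSum (χ ^ 2) ψ * gaussSum (χ ^ 3) ψ)

lemma sixthHyperCoeff_mul_inv [DecidableEq (MulChar F R)] (hψ : ψ ≠ 1)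
    (hq : (Fintype.card F : R) ≠ 0) (χ : MulChar F R) :
    sixthHyperCoeff ψ χ * sixthHyperCoeff ψ χ⁻¹ =
      if χ = 1 then 1 else if orderOf χ = 6 then (Fintype.card F : R)
        else (Fintype.card F : R) ^ 2 := by
  set N : ℕ → R := fun k ↦ gaussSum (χ ^ k) ψ * gaussSum (χ ^ k)⁻¹ ψ
  have hN : sixthHyperCoeff ψ χ * sixthHyperCoeff ψ χ⁻¹ = N 6 * N 1 ^ 3 / (N 2 * N 3) := by
    have := gaussSum_ne_zero hψ hq
    simp only [N, sixthHyperCoeff, inv_pow, inv_inv, pow_one]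
    field_simp [this]
  have hsign : χ (-1) ^ 2 = 1 := by rw [← map_pow, neg_one_sq, map_one]
  rw [hN]
  simp only [N, gaussSum_pow_mul_gaussSum_pow_inv hψ, ← orderOf_eq_one_iff (x := χ),
    ← orderOf_dvd_iff_pow_eq_one]
  generalize χ (-1) = ε at hsign ⊢
  have hε : ε ≠ 0 := by rintro rfl; norm_num at hsign
  generalize orderOf χ = n
  -- In every case the signs contribute `ε ^ (6 + 3 - 2 - 3) = (ε ^ 2) ^ 2 = 1`.
  by_cases h6 : n ∣ 6
  · have : n ≤ 6 := Nat.le_of_dvd (by norm_num) h6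
    interval_cases n <;> norm_num <;> field_simp <;> linear_combination (ε ^ 2 + 1) * hsign
  · have hdvd (k : ℕ) (hk : k ∣ 6) : ¬ n ∣ k := fun h ↦ h6 (h.trans hk)
    have h1 : n ≠ 1 := fun h ↦ h6 (h ▸ one_dvd 6)
    have h6' : n ≠ 6 := fun h ↦ h6 (h ▸ dvd_rfl)
    simp only [hdvd 1 (one_dvd 6), hdvd 2 (by norm_num), hdvd 3 (by norm_num), h6, h1, h6',
      if_false]
    field_simp
    linear_combination (ε ^ 2 + 1) * hsign

lemma sum_sixthHyperCoeff_mul_inv [Fintype (MulChar F R)] (hψ : ψ ≠ 1)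
    (hq : (Fintype.card F : R) ≠ 0) :
    ∑ χ, sixthHyperCoeff ψ χ * sixthHyperCoeff ψ χ⁻¹ =
      Fintype.card (MulChar F R) * (Fintype.card F : R) ^ 2 + (1 - (Fintype.card F : R) ^ 2) +
        #{χ : MulChar F R | orderOf χ = 6} * ((Fintype.card F : R) - (Fintype.card F : R) ^ 2) := by
  classical
  set q : R := (Fintype.card F : R)
  have hsplit (χ : MulChar F R) : sixthHyperCoeff ψ χ * sixthHyperCoeff ψ χ⁻¹ =
      q ^ 2 + (if χ = 1 then 1 - q ^ 2 else 0) + (if orderOf χ = 6 then q - q ^ 2 else 0) := by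
    rw [sixthHyperCoeff_mul_inv hψ hq]
    by_cases h1 : χ = 1
    · simp [h1]
    · by_cases h6 : orderOf χ = 6 <;> simp [h1, h6, q]
  simp_rw [hsplit, sum_add_distrib, sum_const, card_univ, nsmul_eq_mul, sum_ite_eq',
    mem_univ, if_true, ← sum_filter, sum_const, nsmul_eq_mul]

theorem sum_sq_sum_sixthHyperCoeff_mul [Fintype (MulChar F R)] (hψ : ψ ≠ 1)
    (hq : (Fintype.card F : R) ≠ 0) {c : F} (hc : c ≠ 0) :
    ∑ t, (∑ χ, sixthHyperCoeff ψ χ * χ (t * c)) ^ 2 =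
      ((Fintype.card F : R) - 1) *
        (Fintype.card (MulChar F R) * (Fintype.card F : R) ^ 2 + (1 - (Fintype.card F : R) ^ 2) +
          #{χ : MulChar F R | orderOf χ = 6} *
            ((Fintype.card F : R) - (Fintype.card F : R) ^ 2)) := by
  rw [← sum_sixthHyperCoeff_mul_inv hψ hq, ← sum_sq_sum_mulChar]
  exact Equiv.sum_comp (Equiv.mulRight₀ c hc) fun t ↦ (∑ χ, sixthHyperCoeff ψ χ * χ t) ^ 2

end HypergeometricCoefficient

section PrimeField

variable {p : ℕ} {ζ : ℂ}

lemma gaussSumP_eq_gaussSum [NeZero p] (hζ : IsPrimitiveRoot ζ p) (χ : MulChar (ZMod p) ℂ) :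
    gaussSumP p ζ χ = gaussSum χ (AddChar.zmodChar p hζ.pow_eq_one) := by
  rw [gaussSumP, finsum_eq_sum_of_fintype]
  rfl

lemma finsum_Hp66_sq_eq_one_add [NeZero p] :
    ∑ᶠ t : ZMod p, Hp66 p ζ t ^ 2 = 1 + ∑ᶠ (t : ZMod p) (_ : t ≠ 0), Hp66 p ζ t ^ 2 := by
  rw [finsum_eq_sum_of_fintype, finsum_cond_eq_sum_of_cond_iff _ (t := univ.erase 0) (by simp),
    ← add_sum_erase _ _ (mem_univ 0)]
  simp [Hp66]

variable [Fact p.Prime]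

lemma Hp66_of_ne_zero [Fintype (MulChar (ZMod p) ℂ)] (hζ : IsPrimitiveRoot ζ p)
    {t : ZMod p} (ht : t ≠ 0) :
    Hp66 p ζ t = (1 / (1 - (p : ℂ))) *
      ∑ χ, sixthHyperCoeff (AddChar.zmodChar p hζ.pow_eq_one) χ * χ (t * 432⁻¹) := by
  simp only [Hp66, if_neg ht, finsum_eq_sum_of_fintype, gaussSumP_eq_gaussSum hζ,
    Ring.inverse_eq_inv', sixthHyperCoeff]

lemma finsum_ne_zero_Hp66_sq_eq_sum [Fintype (MulChar (ZMod p) ℂ)]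
    (hζ : IsPrimitiveRoot ζ p) :
    ∑ᶠ (t : ZMod p) (_ : t ≠ 0), Hp66 p ζ t ^ 2 = ∑ t, ((1 / (1 - (p : ℂ))) *
      ∑ χ, sixthHyperCoeff (AddChar.zmodChar p hζ.pow_eq_one) χ * χ (t * 432⁻¹)) ^ 2 := by
  rw [finsum_cond_eq_sum_of_cond_iff _ (t := univ.erase 0) (by simp),
    sum_congr rfl fun t ht ↦ by rw [Hp66_of_ne_zero hζ (ne_of_mem_erase ht)]]
  exact sum_erase _ (by simp [MulChar.map_zero])

lemma ofNat_432_ne_zero (hp3 : 3 < p) : (432 : ZMod p) ≠ 0 := by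
  have hp : p.Prime := Fact.out
  intro h
  have hdvd : p ∣ 2 ^ 4 * 3 ^ 3 := (ZMod.natCast_eq_zero_iff _ p).mp (by exact_mod_cast h)
  rcases hp.dvd_mul.mp hdvd with h2 | h3
  · have := Nat.le_of_dvd two_pos (hp.dvd_of_dvd_pow h2); omega
  · have := Nat.le_of_dvd three_pos (hp.dvd_of_dvd_pow h3); omega

lemma zmodChar_ne_one (hζ : IsPrimitiveRoot ζ p) : AddChar.zmodChar p hζ.pow_eq_one ≠ 1 := by
  intro h
  have hp : p.Prime := Fact.out
  have := DFunLike.congr_fun h 1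
  rw [AddChar.zmodChar_apply, ZMod.val_one, pow_one, AddChar.one_apply] at this
  exact hζ.ne_one hp.one_lt this

lemma card_mulChar_orderOf_eq_six [Fintype (MulChar (ZMod p) ℂ)] (hp3 : 3 < p) :
    #{χ : MulChar (ZMod p) ℂ | orderOf χ = 6} = if p % 3 = 1 then 2 else 0 := by
  have hp : p.Prime := Fact.out
  have hodd : p % 2 = 1 := Nat.odd_iff.mp (hp.odd_of_ne_two (by omega))
  have h3 : p % 3 ≠ 0 := fun h ↦ by
    have := (Nat.prime_dvd_prime_iff_eq Nat.prime_three hp).mp (Nat.dvd_of_mod_eq_zero h)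
    omega
  rw [card_mulChar_orderOf_eq, ZMod.card]
  by_cases h : p % 3 = 1
  · rw [if_pos (by omega), if_pos h]
    decide
  · rw [if_neg (by omega), if_neg h]

lemma finsum_ne_zero_Hp66_sq (hp3 : 3 < p) (hζ : IsPrimitiveRoot ζ p) :
    ∑ᶠ (t : ZMod p) (_ : t ≠ 0), Hp66 p ζ t ^ 2 =
      if p % 3 = 1 then (p : ℂ) ^ 2 - 3 * p - 1 else (p : ℂ) ^ 2 - p - 1 := by
  let _ := Fintype.ofFinite (MulChar (ZMod p) ℂ)
  have hp : p.Prime := Fact.out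
  have hq : (p : ℂ) ≠ 0 := by exact_mod_cast hp.ne_zero
  have hq1 : (1 : ℂ) - p ≠ 0 := by
    rw [sub_ne_zero]; exact_mod_cast hp.one_lt.ne
  rw [finsum_ne_zero_Hp66_sq_eq_sum hζ]
  simp_rw [mul_pow, ← mul_sum]
  rw [sum_sq_sum_sixthHyperCoeff_mul (zmodChar_ne_one hζ) (by rwa [ZMod.card])
      (inv_ne_zero (ofNat_432_ne_zero hp3)), card_mulChar_eq_card_sub_one,
    card_mulChar_orderOf_eq_six hp3, ZMod.card, Nat.cast_sub hp.one_le]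
  split_ifs <;> field_simp <;> ring

lemma norm_finsum_Hp66_sq_div_sq_sub_one_le (hp3 : 3 < p) (hζ : IsPrimitiveRoot ζ p) :
    ‖(1 / (p : ℂ) ^ 2) * (∑ᶠ t : ZMod p, Hp66 p ζ t ^ 2) - 1‖ ≤ 3 / p := by
  have hp : (p : ℂ) ≠ 0 := by exact_mod_cast (Fact.out : p.Prime).ne_zero
  rw [finsum_Hp66_sq_eq_one_add, finsum_ne_zero_Hp66_sq hp3 hζ]
  split_ifs
  · rw [show (1 / (p : ℂ) ^ 2) * (1 + ((p : ℂ) ^ 2 - 3 * p - 1)) - 1 = -3 / p by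
      field_simp; ring, norm_div, Complex.norm_natCast]
    norm_num
  · rw [show (1 / (p : ℂ) ^ 2) * (1 + ((p : ℂ) ^ 2 - p - 1)) - 1 = -1 / p by
      field_simp; ring, norm_div, Complex.norm_natCast]
    gcongr
    norm_num

end PrimeField

/-- For `p > 3` prime, `∑_{λ ∈ F_p^×} H_p({1/6,5/6},{1,1}; λ)²` equals `p² - 3p - 1` if
`p ≡ 1 (mod 3)` and `p² - p - 1` if `p ≡ 2 (mod 3)`; in particular
`(1/p²) ∑_{λ ∈ F_p} H_p({1/6,5/6},{1,1}; λ)² → 1` as `p → ∞` over primes. -/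
theorem second_moment_sixth (p : ℕ) :
    (∀ (_ : p.Prime) (_ : 3 < p) (ζ : ℂ), IsPrimitiveRoot ζ p →
      (∑ᶠ (lam : ZMod p) (_ : lam ≠ 0), (Hp66 p ζ lam) ^ 2) =
        if p % 3 = 1 then (p : ℂ) ^ 2 - 3 * p - 1 else (p : ℂ) ^ 2 - p - 1) ∧
    (∀ ε : ℝ, 0 < ε → ∃ N : ℕ, ∀ q : ℕ, N ≤ q → q.Prime →
      ∀ ζ : ℂ, IsPrimitiveRoot ζ q →
        ‖(1 / (q : ℂ) ^ 2) * (∑ᶠ lam : ZMod q, (Hp66 q ζ lam) ^ 2) - 1‖ < ε) := by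
  refine ⟨fun hp hp3 ζ hζ ↦ ?_, fun ε hε ↦ ?_⟩
  · have : Fact p.Prime := ⟨hp⟩
    exact finsum_ne_zero_Hp66_sq hp3 hζ
  · obtain ⟨N, hN⟩ := exists_nat_gt (3 / ε)
    refine ⟨max 4 N, fun q hq hqp ζ hζ ↦ ?_⟩
    have : Fact q.Prime := ⟨hqp⟩
    have hNq : (N : ℝ) ≤ q := by exact_mod_cast le_of_max_le_right hq
    calc _ ≤ 3 / (q : ℝ) := norm_finsum_Hp66_sq_div_sq_sub_one_le (by omega) hζ
      _ < ε := (div_lt_comm₀ (by exact_mod_cast hqp.pos) hε).mpr (hN.trans_le hNq)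
end
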